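/- arXiv:2210.17216 — 9 statements merged into one kernel-verified Lean document; each statement's English description precedes it below -/
import Mathlib

section
/- Let G ⊆ GL_d(ℝ) act linearly on ℝ^d leaving a differentiable function L invariant, and let M ∈ Lie(G) with M^T ∈ Lie(G). Then the function Q_M(v) = vᵀMv is constant along any gradient flow curve of L, i.e., if γ'(t) = -∇L(γ(t)) then t ↦ γ(t)ᵀ M γ(t) is constant. -/
/-!
Invariance of `L` under the one-parameter group `exp (t • A)` gives, on differentiating at
`t = 0`, `⟪∇L θ, A θ⟫ = 0`. Along a gradient flow curve,
`d/dt ⟪γ, A γ⟫ = -⟪∇L γ, A γ⟫ - ⟪∇L γ, A† γ⟫`, and for `A = M` both terms vanish because `M` and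
`Mᵀ = M†` generate symmetries of `L`.
-/

open Matrix
open scoped RealInnerProductSpace

section GradientFlow

variable {E : Type*} [NormedAddCommGroup E] [InnerProductSpace ℝ E] [CompleteSpace E]

theorem inner_gradient_apply_eq_zero_of_exp_smul_invariant {L : E → ℝ} {θ : E}
    (hL : DifferentiableAt ℝ L θ) (A : E →L[ℝ] E)
    (hA : ∀ t : ℝ, L (NormedSpace.exp (t • A) θ) = L θ) :
    ⟪gradient L θ, A θ⟫ = 0 := by
  have horbit : HasDerivAt (fun t : ℝ => NormedSpace.exp (t • A) θ) (A θ) 0 := by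
    simpa using (hasDerivAt_exp_smul_const A (0 : ℝ)).clm_apply (hasDerivAt_const 0 θ)
  have hderiv : HasDerivAt (fun t : ℝ => L (NormedSpace.exp (t • A) θ)) ⟪gradient L θ, A θ⟫ 0 :=
    hL.hasGradientAt.hasFDerivAt.comp_hasDerivAt_of_eq 0 horbit (by simp)
  exact hderiv.unique (by simpa only [hA] using hasDerivAt_const (0 : ℝ) (L θ))

theorem inner_apply_eq_of_hasDerivAt_neg_gradient {L : E → ℝ} (A : E →L[ℝ] E)
    (hA : ∀ θ, ⟪gradient L θ, A θ⟫ = 0)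
    (hA_adjoint : ∀ θ, ⟪gradient L θ, ContinuousLinearMap.adjoint A θ⟫ = 0)
    {γ : ℝ → E} (hγ : ∀ t, HasDerivAt γ (-gradient L (γ t)) t) (s t : ℝ) :
    ⟪γ s, A (γ s)⟫ = ⟪γ t, A (γ t)⟫ := by
  have hQ : ∀ u, HasDerivAt (fun r => ⟪γ r, A (γ r)⟫) 0 u := fun u =>
    ((hγ u).inner ℝ (A.hasFDerivAt.comp_hasDerivAt u (hγ u))).congr_deriv <| by
      rw [Function.comp_apply, map_neg, inner_neg_right, inner_neg_left,
        ← ContinuousLinearMap.adjoint_inner_left, real_inner_comm, hA, hA_adjoint, neg_zero,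
        add_zero]
  exact is_const_of_deriv_eq_zero (fun u => (hQ u).differentiableAt) (fun u => (hQ u).deriv) s t

end GradientFlow

section MatrixExp

variable {n : Type*} [Fintype n] [DecidableEq n]

open scoped Matrix.Norms.L2Operator in
-- `NormedSpace.exp` does not depend on the norm; any Banach-algebra norm on matrices will do.
theorem Matrix.toEuclideanCLM_exp (N : Matrix n n ℝ) :
    toEuclideanCLM (𝕜 := ℝ) (NormedSpace.exp N) = NormedSpace.exp (toEuclideanCLM (𝕜 := ℝ) N) :=
  NormedSpace.map_exp_of_mem_ball (𝕂 := ℝ) (toEuclideanCLM (𝕜 := ℝ) (n := n))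
    (LinearMap.continuous_of_finiteDimensional
      (toEuclideanCLM (𝕜 := ℝ) (n := n)).toAlgEquiv.toLinearMap) N
    ((NormedSpace.expSeries_radius_eq_top ℝ (Matrix n n ℝ)).symm ▸ edist_lt_top _ _)

theorem Matrix.inner_gradient_toEuclideanCLM_apply_eq_zero {L : EuclideanSpace ℝ n → ℝ}
    {θ : EuclideanSpace ℝ n} (hL : DifferentiableAt ℝ L θ) (N : Matrix n n ℝ)
    (hN : ∀ t : ℝ, L (toEuclideanLin (NormedSpace.exp (t • N)) θ) = L θ) :
    ⟪gradient L θ, toEuclideanCLM (𝕜 := ℝ) N θ⟫ = 0 :=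
  inner_gradient_apply_eq_zero_of_exp_smul_invariant hL _ fun t => by
    rw [← map_smul, ← toEuclideanCLM_exp]
    exact hN t

end MatrixExp

/-- Let `G ⊆ GL_d(ℝ)` act linearly (by matrix multiplication) on `ℝ^d` leaving the
differentiable function `L` invariant, and let `M ∈ Lie(G)` with `Mᵀ ∈ Lie(G)` (so the
one-parameter subgroups `exp(tM)` and `exp(tMᵀ)` lie in `G` and hence leave `L`
invariant). Then `Q_M(v) = vᵀMv` is constant along any gradient flow curve of `L`. -/
theorem conserved_quantity_of_infinitesimal_symmetry
    {d : ℕ} (L : EuclideanSpace ℝ (Fin d) → ℝ) (hL : Differentiable ℝ L)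
    (M : Matrix (Fin d) (Fin d) ℝ)
    (hM : ∀ (t : ℝ) (θ : EuclideanSpace ℝ (Fin d)),
      L (Matrix.toEuclideanLin (NormedSpace.exp (t • M)) θ) = L θ)
    (hMT : ∀ (t : ℝ) (θ : EuclideanSpace ℝ (Fin d)),
      L (Matrix.toEuclideanLin (NormedSpace.exp (t • Mᵀ)) θ) = L θ)
    (γ : ℝ → EuclideanSpace ℝ (Fin d))
    (hγ : ∀ t : ℝ, HasDerivAt γ (-gradient L (γ t)) t)
    (s t : ℝ) :
    ⟪γ s, Matrix.toEuclideanLin M (γ s)⟫ = ⟪γ t, Matrix.toEuclideanLin M (γ t)⟫ := by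
  have hadjoint :
      ContinuousLinearMap.adjoint (toEuclideanCLM (𝕜 := ℝ) M) = toEuclideanCLM (𝕜 := ℝ) Mᵀ := by
    rw [← conjTranspose_eq_transpose_of_trivial, ← star_eq_conjTranspose, map_star]
    rfl
  exact inner_apply_eq_of_hasDerivAt_neg_gradient (toEuclideanCLM (𝕜 := ℝ) M)
    (fun θ => inner_gradient_toEuclideanCLM_apply_eq_zero (hL θ) M (hM · θ))
    (hadjoint ▸ fun θ => inner_gradient_toEuclideanCLM_apply_eq_zero (hL θ) Mᵀ (hMT · θ)) hγ s t
end

section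
/- Let G ⊆ GL_d(ℝ) act linearly on ℝ^d leaving L invariant, and let M ∈ Lie(G). Then along any gradient flow curve γ of L, one has γ'(t)ᵀ M γ(t) = 0 for all t. -/
/-! Differentiating the invariance `L (exp (s • M) θ) = L θ` at `s = 0` shows that `∇L(θ)` is
orthogonal to `M θ`; along a gradient flow the velocity is `-∇L(γ t)`. -/

open Matrix NormedSpace
open scoped RealInnerProductSpace

theorem fderiv_apply_eq_zero_of_comp_eq_const {𝕜 E F : Type*} [NontriviallyNormedField 𝕜]
    [NormedAddCommGroup E] [NormedSpace 𝕜 E] [NormedAddCommGroup F] [NormedSpace 𝕜 F]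
    {f : E → F} {c : 𝕜 → E} {x v : E} {s₀ : 𝕜} (hf : DifferentiableAt 𝕜 f x)
    (hc : HasDerivAt c v s₀) (hc₀ : c s₀ = x) (hconst : ∀ s, f (c s) = f x) :
    fderiv 𝕜 f x v = 0 := by
  subst hc₀
  have h := hf.hasFDerivAt.comp_hasDerivAt s₀ hc
  rw [show f ∘ c = fun _ => f (c s₀) from funext hconst] at h
  exact h.unique (hasDerivAt_const _ _)

namespace Matrix

variable {n : Type*} [Fintype n] [DecidableEq n]

section

-- Any norm will do to differentiate `exp`: all of them induce the product topology on matrices.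
attribute [local instance] Matrix.linftyOpNormedRing Matrix.linftyOpNormedAlgebra

theorem hasDerivAt_toEuclideanLin_exp_smul_apply {𝕂 : Type*} [RCLike 𝕂] (M : Matrix n n 𝕂)
    (θ : EuclideanSpace 𝕂 n) :
    HasDerivAt (fun s : 𝕂 => toEuclideanLin (exp (s • M)) θ) (toEuclideanLin M θ) 0 := by
  let evalAt : Matrix n n 𝕂 →L[𝕂] EuclideanSpace 𝕂 n :=
    LinearMap.toContinuousLinearMap (toEuclideanLin.toLinearMap.flip θ)
  have hexp : HasDerivAt (fun s : 𝕂 => exp (s • M)) M 0 := by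
    have h := hasDerivAt_exp_smul_const (𝕂 := 𝕂) M 0
    simp only [zero_smul, exp_zero, one_mul] at h
    exact h
  exact evalAt.hasFDerivAt.comp_hasDerivAt (0 : 𝕂) hexp

end

theorem inner_gradient_toEuclideanLin_eq_zero_of_exp_invariant {L : EuclideanSpace ℝ n → ℝ}
    {θ : EuclideanSpace ℝ n} (M : Matrix n n ℝ) (hL : DifferentiableAt ℝ L θ)
    (hM : ∀ s : ℝ, L (toEuclideanLin (exp (s • M)) θ) = L θ) :
    ⟪gradient L θ, toEuclideanLin M θ⟫ = 0 := by
  rw [inner_gradient_left]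
  refine fderiv_apply_eq_zero_of_comp_eq_const hL
    (hasDerivAt_toEuclideanLin_exp_smul_apply M θ) ?_ hM
  simp

end Matrix

theorem gradient_flow_orthogonal_to_lie_algebra_action_general
    {d : ℕ} (L : EuclideanSpace ℝ (Fin d) → ℝ) (hL : Differentiable ℝ L)
    (M : Matrix (Fin d) (Fin d) ℝ)
    (hM : ∀ (t : ℝ) (θ : EuclideanSpace ℝ (Fin d)),
      L (Matrix.toEuclideanLin (NormedSpace.exp (t • M)) θ) = L θ)
    (γ γ' : ℝ → EuclideanSpace ℝ (Fin d))
    (hflow : ∀ t : ℝ, γ' t = -gradient L (γ t)) (t : ℝ) :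
    ⟪γ' t, Matrix.toEuclideanLin M (γ t)⟫ = 0 := by
  rw [hflow t, inner_neg_left,
    inner_gradient_toEuclideanLin_eq_zero_of_exp_invariant M (hL _) (fun s => hM s _), neg_zero]

/-- Let `G ⊆ GL_d(ℝ)` act linearly on `ℝ^d` leaving the differentiable function `L`
invariant, and let `M ∈ Lie(G)` (so the one-parameter subgroup `exp(tM)` lies in `G`
and leaves `L` invariant). Then along any gradient flow curve `γ` of `L`, one has
`γ'(t)ᵀ M γ(t) = 0` for all `t`. -/
theorem gradient_flow_orthogonal_to_lie_algebra_action
    {d : ℕ} (L : EuclideanSpace ℝ (Fin d) → ℝ) (hL : Differentiable ℝ L)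
    (M : Matrix (Fin d) (Fin d) ℝ)
    (hM : ∀ (t : ℝ) (θ : EuclideanSpace ℝ (Fin d)),
      L (Matrix.toEuclideanLin (NormedSpace.exp (t • M)) θ) = L θ)
    (γ γ' : ℝ → EuclideanSpace ℝ (Fin d))
    (hγ : ∀ t : ℝ, HasDerivAt γ (γ' t) t)
    (hflow : ∀ t : ℝ, γ' t = -gradient L (γ t)) (t : ℝ) :
    ⟪γ' t, Matrix.toEuclideanLin M (γ t)⟫ = 0 :=
  gradient_flow_orthogonal_to_lie_algebra_action_general L hL M hM γ γ' hflow t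
end

section
/- Consider a two-layer linear network with parameters (U,V) ∈ ℝ^{m×h} × ℝ^{h×n} and loss L(U,V) depending only on the product UV. Under gradient flow U' = -∂L/∂U, V' = -∂L/∂V, every entry of the matrix VVᵀ - UᵀU is conserved, i.e., d/dt(V(t)V(t)ᵀ - U(t)ᵀU(t)) = 0. -/
open Matrix

attribute [local instance] Matrix.frobeniusNormedAddCommGroup Matrix.frobeniusNormedSpace

section

variable {𝕜 : Type*} [RCLike 𝕜] {l m n : Type*} [Fintype l] [Fintype m] [Fintype n]

variable (𝕜 l m n) in
noncomputable def Matrix.mulCLM : Matrix l m 𝕜 →L[𝕜] Matrix m n 𝕜 →L[𝕜] Matrix l n 𝕜 :=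
  (mulLinearMap 𝕜).mkContinuous₂ 1 fun A B => by
    simpa using frobenius_norm_mul A B

variable (𝕜 m n) in
noncomputable def Matrix.transposeCLM : Matrix m n 𝕜 →L[𝕜] Matrix n m 𝕜 :=
  (transposeLinearEquiv m n 𝕜 𝕜).toLinearMap.mkContinuous 1 fun A => by
    simp [frobenius_norm_transpose]

variable {f : 𝕜 → Matrix l m 𝕜} {g : 𝕜 → Matrix m n 𝕜} {f' : Matrix l m 𝕜}
  {g' : Matrix m n 𝕜} {t : 𝕜}

theorem HasDerivAt.matrix_mul (hf : HasDerivAt f f' t) (hg : HasDerivAt g g' t) :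
    HasDerivAt (fun t => f t * g t) (f' * g t + f t * g') t := by
  rw [add_comm]
  exact (mulCLM 𝕜 l m n).hasDerivAt_of_bilinear (fun _ => hf) (fun _ => hg)

theorem HasDerivAt.matrix_transpose (hf : HasDerivAt f f' t) :
    HasDerivAt (fun t => (f t)ᵀ) f'ᵀ t :=
  (transposeCLM 𝕜 l m).hasFDerivAt.comp_hasDerivAt t hf

end

/-- Two-layer linear network: the loss is `L(U,V) = ℓ(UV)`, so the gradient flow reads
`U' = -∇ℓ(UV)·Vᵀ` and `V' = -Uᵀ·∇ℓ(UV)` (here `G t = ∇ℓ(U(t)V(t))`). Then the matrix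
`V Vᵀ - Uᵀ U` is conserved: its derivative along the flow is `0` (every entry is
conserved). -/
theorem imbalance_conserved_linear_network
    {m h n : ℕ}
    (U : ℝ → Matrix (Fin m) (Fin h) ℝ) (V : ℝ → Matrix (Fin h) (Fin n) ℝ)
    (G : ℝ → Matrix (Fin m) (Fin n) ℝ)
    (hU : ∀ t : ℝ, HasDerivAt U (-(G t * (V t)ᵀ)) t)
    (hV : ∀ t : ℝ, HasDerivAt V (-((U t)ᵀ * G t)) t)
    (t : ℝ) :
    HasDerivAt (fun t => V t * (V t)ᵀ - (U t)ᵀ * U t) 0 t := by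
  have hVV : HasDerivAt (fun t => V t * (V t)ᵀ)
      (-((U t)ᵀ * G t * (V t)ᵀ + V t * (G t)ᵀ * U t)) t :=
    ((hV t).matrix_mul (hV t).matrix_transpose).congr_deriv <| by
      simp only [transpose_neg, transpose_mul, transpose_transpose, Matrix.neg_mul,
        Matrix.mul_neg, Matrix.mul_assoc, neg_add]
  have hUU : HasDerivAt (fun t => (U t)ᵀ * U t)
      (-((U t)ᵀ * G t * (V t)ᵀ + V t * (G t)ᵀ * U t)) t :=
    ((hU t).matrix_transpose.matrix_mul (hU t)).congr_deriv <| by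
      simp only [transpose_neg, transpose_mul, transpose_transpose, Matrix.neg_mul,
        Matrix.mul_neg, Matrix.mul_assoc, neg_add, add_comm]
  exact (hVV.sub hUU).congr_deriv (sub_self _)
end

section
/- Consider a two-layer network with radial rescaling activation σ(z) = f(‖z‖)z and loss invariant under the O(h)-action g·(U,V) = (Ug⁻¹, gV). Then along any gradient flow trajectory, V V̇ᵀ - V̇Vᵀ + UᵀU̇ - U̇ᵀU = 0, where dots denote time derivatives under gradient flow. -/
/-!
Differentiating the invariance `L (U exp(-sX), exp(sX) V) = L U V` at `s = 0` for a skew-symmetric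
`X` shows that the gradient of `L` is orthogonal to the infinitesimal orbit `(-U X, X V)`. Along
gradient flow this says `tr (Q X) = 0` for every skew `X`, where `Q = V V̇ᵀ - U̇ᵀ U`; hence `Q` is
symmetric, and `Q - Qᵀ` is exactly the angular momentum expression.
-/

open Matrix

attribute [local instance] Matrix.frobeniusNormedAddCommGroup Matrix.frobeniusNormedSpace

theorem Matrix.transpose_mul_self_exp_of_transpose_eq_neg {h : Type*} [Fintype h] [DecidableEq h]
    {X : Matrix h h ℝ} (hX : Xᵀ = -X) : (NormedSpace.exp X)ᵀ * NormedSpace.exp X = 1 := by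
  rw [← Matrix.exp_transpose, hX, ← Matrix.exp_add_of_commute _ _ (Commute.refl X).neg_left,
    neg_add_cancel, NormedSpace.exp_zero]

theorem HasFDerivAt.apply_skew_orbit_eq_zero {m h n : Type*} [Fintype m] [Fintype h]
    [DecidableEq h] [Fintype n] {F : Matrix m h ℝ × Matrix h n ℝ → ℝ}
    {D : Matrix m h ℝ × Matrix h n ℝ →L[ℝ] ℝ}
    {U : Matrix m h ℝ} {V : Matrix h n ℝ} (hD : HasFDerivAt F D (U, V))
    (hinv : ∀ g : Matrix h h ℝ, gᵀ * g = 1 → F (U * g⁻¹, g * V) = F (U, V))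
    {X : Matrix h h ℝ} (hX : Xᵀ = -X) : D (-(U * X), X * V) = 0 := by
  let : NormedRing (Matrix h h ℝ) := Matrix.frobeniusNormedRing
  let : NormedAlgebra ℝ (Matrix h h ℝ) := Matrix.frobeniusNormedAlgebra
  have hcurve : HasDerivAt
      (fun s : ℝ => (U * NormedSpace.exp (s • -X), NormedSpace.exp (s • X) * V))
      (U * -X, X * V) 0 := by
    have hexpU := hasDerivAt_exp_smul_const (𝕂 := ℝ) (-X) 0
    have hexpV := hasDerivAt_exp_smul_const (𝕂 := ℝ) X 0
    simp only [zero_smul, NormedSpace.exp_zero, one_mul] at hexpU hexpV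
    have hU := (mulLeftLinearMap h ℝ U).toContinuousLinearMap.hasFDerivAt.comp_hasDerivAt 0 hexpU
    have hV := (mulRightLinearMap h ℝ V).toContinuousLinearMap.hasFDerivAt.comp_hasDerivAt 0 hexpV
    exact hU.prodMk hV
  have horbit : (fun s : ℝ => F (U * NormedSpace.exp (s • -X), NormedSpace.exp (s • X) * V)) =
      fun _ => F (U, V) := by
    funext s
    rw [smul_neg, Matrix.exp_neg]
    exact hinv _ (transpose_mul_self_exp_of_transpose_eq_neg (by rw [transpose_smul, hX, smul_neg]))
  have hchain := hD.comp_hasDerivAt_of_eq 0 hcurve (by simp)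
  rw [Function.comp_def, horbit] at hchain
  rw [← Matrix.mul_neg]
  exact hchain.unique (hasDerivAt_const 0 _)

theorem Matrix.isSymm_of_trace_mul_skew_eq_zero {h : Type*} [Fintype h] {Q : Matrix h h ℝ}
    (hQ : ∀ X : Matrix h h ℝ, Xᵀ = -X → trace (Q * X) = 0) : Q.IsSymm := by
  set S := Q - Qᵀ with hS
  have hSt : Sᵀ = -S := by simp [hS]
  have hQS : trace (Q * S) = 0 := hQ S hSt
  have hQtS : trace (Qᵀ * S) = 0 := by
    rw [← trace_transpose, transpose_mul, transpose_transpose, hSt, Matrix.neg_mul, trace_neg,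
      trace_mul_comm, hQS, neg_zero]
  have hS0 : S = 0 := by
    rw [← trace_conjTranspose_mul_self_eq_zero_iff, conjTranspose_eq_transpose_of_trivial,
      transpose_sub, transpose_transpose, Matrix.sub_mul, trace_sub, hQS, hQtS, sub_zero]
  exact (sub_eq_zero.mp hS0).symm

theorem angular_momentum_cancellation_general
    {m h n : ℕ}
    (L : Matrix (Fin m) (Fin h) ℝ → Matrix (Fin h) (Fin n) ℝ → ℝ)
    (hLdiff : Differentiable ℝ
      (fun p : Matrix (Fin m) (Fin h) ℝ × Matrix (Fin h) (Fin n) ℝ => L p.1 p.2))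
    (hinv : ∀ g : Matrix (Fin h) (Fin h) ℝ, gᵀ * g = 1 →
      ∀ (U : Matrix (Fin m) (Fin h) ℝ) (V : Matrix (Fin h) (Fin n) ℝ),
        L (U * g⁻¹) (g * V) = L U V)
    (U dU : ℝ → Matrix (Fin m) (Fin h) ℝ) (V dV : ℝ → Matrix (Fin h) (Fin n) ℝ)
    (hgrad : ∀ (t : ℝ) (A : Matrix (Fin m) (Fin h) ℝ) (B : Matrix (Fin h) (Fin n) ℝ),
      HasDerivAt (fun s : ℝ => L (U t + s • A) (V t + s • B))
        (-(Matrix.trace ((dU t)ᵀ * A) + Matrix.trace ((dV t)ᵀ * B))) 0)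
    (t : ℝ) :
    V t * (dV t)ᵀ - dV t * (V t)ᵀ + (U t)ᵀ * dU t - (dU t)ᵀ * U t = 0 := by
  have hF := (hLdiff (U t, V t)).hasFDerivAt
  have hfderiv (A B) :
      fderiv ℝ _ (U t, V t) (A, B) = -(trace ((dU t)ᵀ * A) + trace ((dV t)ᵀ * B)) :=
    (hF.hasLineDerivAt (A, B)).unique (hgrad t A B)
  have hQ : (V t * (dV t)ᵀ - (dU t)ᵀ * U t).IsSymm := by
    refine isSymm_of_trace_mul_skew_eq_zero fun X hX => ?_
    have h0 := hF.apply_skew_orbit_eq_zero (fun g hg => hinv g hg (U t) (V t)) hX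
    have hcycle : trace ((dV t)ᵀ * (X * V t)) = trace (V t * (dV t)ᵀ * X) := by
      rw [trace_mul_comm, Matrix.mul_assoc, trace_mul_comm X]
    rw [hfderiv, Matrix.mul_neg, trace_neg, hcycle, ← Matrix.mul_assoc] at h0
    rw [Matrix.sub_mul, trace_sub]
    linarith
  calc _ = (V t * (dV t)ᵀ - (dU t)ᵀ * U t) - (V t * (dV t)ᵀ - (dU t)ᵀ * U t)ᵀ := by
        simp only [transpose_sub, transpose_mul, transpose_transpose]; abel
    _ = 0 := sub_eq_zero.mpr hQ.symm

/-- Two-layer network with a loss invariant under the `O(h)` action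
`g·(U,V) = (Ug⁻¹, gV)`. Along any gradient flow trajectory (`U̇ = -∂L/∂U`,
`V̇ = -∂L/∂V`, with gradients taken for the Frobenius inner product), one has the
angular-momentum cancellation `V V̇ᵀ - V̇ Vᵀ + Uᵀ U̇ - U̇ᵀ U = 0`. -/
theorem angular_momentum_cancellation
    {m h n : ℕ}
    (L : Matrix (Fin m) (Fin h) ℝ → Matrix (Fin h) (Fin n) ℝ → ℝ)
    (hLdiff : Differentiable ℝ
      (fun p : Matrix (Fin m) (Fin h) ℝ × Matrix (Fin h) (Fin n) ℝ => L p.1 p.2))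
    (hinv : ∀ g : Matrix (Fin h) (Fin h) ℝ, gᵀ * g = 1 →
      ∀ (U : Matrix (Fin m) (Fin h) ℝ) (V : Matrix (Fin h) (Fin n) ℝ),
        L (U * g⁻¹) (g * V) = L U V)
    (U dU : ℝ → Matrix (Fin m) (Fin h) ℝ) (V dV : ℝ → Matrix (Fin h) (Fin n) ℝ)
    (hU : ∀ t : ℝ, HasDerivAt U (dU t) t)
    (hV : ∀ t : ℝ, HasDerivAt V (dV t) t)
    (hgrad : ∀ (t : ℝ) (A : Matrix (Fin m) (Fin h) ℝ) (B : Matrix (Fin h) (Fin n) ℝ),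
      HasDerivAt (fun s : ℝ => L (U t + s • A) (V t + s • B))
        (-(Matrix.trace ((dU t)ᵀ * A) + Matrix.trace ((dV t)ᵀ * B))) 0)
    (t : ℝ) :
    V t * (dV t)ᵀ - dV t * (V t)ᵀ + (U t)ᵀ * dU t - (dU t)ᵀ * U t = 0 :=
  angular_momentum_cancellation_general L hLdiff hinv U dU V dV hgrad t
end

section
/- For a two-layer linear network with loss L(U,V) = (1/2)‖Y - UVX‖², gradient descent with learning rate η satisfies |Q_{t+1} - Q_t| ≤ η² |dL/dt|, where Q_t = Tr(U_tᵀU_t - V_tV_tᵀ) and dL/dt = -Tr((∂L/∂U)ᵀ(∂L/∂U)) - Tr((∂L/∂V)ᵀ(∂L/∂V)) is the instantaneous rate of change of the loss under gradient flow evaluated at (U_t, V_t). -/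
open Matrix

lemma trace_transpose_mul_self_nonneg {p q : ℕ} (A : Matrix (Fin p) (Fin q) ℝ) :
    0 ≤ Matrix.trace (Aᵀ * A) := by
  rw [Matrix.trace]
  apply Finset.sum_nonneg
  intro i _
  simp only [Matrix.diag_apply, Matrix.mul_apply, Matrix.transpose_apply]
  apply Finset.sum_nonneg
  intro j _
  exact mul_self_nonneg _

/-- Gradient descent with learning rate `η` for a two-layer linear network, where the
loss depends only on the product `UV` (so `∂L/∂U = G·Vᵀ` and `∂L/∂V = Uᵀ·G` with
`G = ∇_W L` at `W = UV`). One descent step takes `(U,V)` to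
`(U - η G Vᵀ, V - η Uᵀ G)`, and the change of `Q = Tr(UᵀU - VVᵀ)` satisfies
`|Q_{t+1} - Q_t| ≤ η² |dL/dt|`, where
`dL/dt = -(Tr((GVᵀ)ᵀ(GVᵀ)) + Tr((UᵀG)ᵀ(UᵀG)))` is the instantaneous rate of change of
the loss under gradient flow at `(U,V)`. -/
theorem gradient_descent_Q_change_bound
    {m h n : ℕ}
    (U : Matrix (Fin m) (Fin h) ℝ) (V : Matrix (Fin h) (Fin n) ℝ)
    (G : Matrix (Fin m) (Fin n) ℝ) (η : ℝ) :
    |Matrix.trace ((U - η • (G * Vᵀ))ᵀ * (U - η • (G * Vᵀ))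
        - (V - η • (Uᵀ * G)) * (V - η • (Uᵀ * G))ᵀ)
      - Matrix.trace (Uᵀ * U - V * Vᵀ)|
      ≤ η ^ 2 * |(-(Matrix.trace ((G * Vᵀ)ᵀ * (G * Vᵀ))
          + Matrix.trace ((Uᵀ * G)ᵀ * (Uᵀ * G))))| := by
  set a := Matrix.trace ((G * Vᵀ)ᵀ * (G * Vᵀ)) with ha
  set b := Matrix.trace ((Uᵀ * G)ᵀ * (Uᵀ * G)) with hb
  have ha0 : 0 ≤ a := trace_transpose_mul_self_nonneg _
  have hb0 : 0 ≤ b := trace_transpose_mul_self_nonneg _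
  have key : Matrix.trace ((U - η • (G * Vᵀ))ᵀ * (U - η • (G * Vᵀ))
        - (V - η • (Uᵀ * G)) * (V - η • (Uᵀ * G))ᵀ)
      - Matrix.trace (Uᵀ * U - V * Vᵀ) = η ^ 2 * (a - b) := by
    have h1 : Matrix.trace (Uᵀ * (G * Vᵀ)) = Matrix.trace ((Uᵀ * G) * Vᵀ) := by
      rw [Matrix.mul_assoc]
    have h2 : Matrix.trace ((G * Vᵀ)ᵀ * U) = Matrix.trace (V * (Uᵀ * G)ᵀ) := by
      simp only [Matrix.transpose_mul, Matrix.transpose_transpose]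
      rw [Matrix.mul_assoc, Matrix.trace_mul_comm]
    simp only [Matrix.transpose_sub, Matrix.transpose_smul, Matrix.sub_mul, Matrix.mul_sub,
      Matrix.smul_mul, Matrix.mul_smul, Matrix.trace_sub, Matrix.trace_smul, smul_smul,
      smul_eq_mul, ha, hb]
    rw [Matrix.trace_mul_comm ((Uᵀ * G)) Vᵀ] at h1
    rw [Matrix.trace_mul_comm V ((Uᵀ * G)ᵀ)] at h2
    ring_nf
    rw [show (Uᵀ * G * Vᵀ).trace = (Vᵀ * (Uᵀ * G)).trace from Matrix.trace_mul_comm _ _,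
      show (V * (Uᵀ * G)ᵀ).trace = ((Uᵀ * G)ᵀ * V).trace from Matrix.trace_mul_comm _ _,
      show (Uᵀ * G * (Uᵀ * G)ᵀ).trace = ((Uᵀ * G)ᵀ * (Uᵀ * G)).trace from Matrix.trace_mul_comm _ _]
    rw [h1, h2]
    ring
  rw [key, abs_neg, abs_mul, abs_of_nonneg (add_nonneg ha0 hb0), abs_of_nonneg (sq_nonneg η)]
  have : |a - b| ≤ a + b := by
    calc |a - b| ≤ |a| + |b| := abs_sub _ _
    _ = a + b := by rw [abs_of_nonneg ha0, abs_of_nonneg hb0]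
  nlinarith [sq_nonneg η, this, abs_nonneg (a - b)]
end

section
/- For any tuple β = (β₁,...,β_n) of real numbers, the (n+1)×(n+1) matrix R(β) defined by R(β)_{ij} = cos(β_{j-1})(∏_{k=j}^{i-1} sin(β_k))cos(β_i) if j ≤ i, R(β)_{ij} = -sin(β_i) if j = i+1, and R(β)_{ij} = 0 if j > i+1 (with β₀ = β_{n+1} = 0) is an orthogonal matrix. -/
open Matrix

private noncomputable def Amat (β : ℕ → ℝ) (i j : ℕ) : ℝ :=
  if j ≤ i then
    Real.cos (β j) * (∏ k ∈ Finset.Icc (j + 1) i, Real.sin (β k)) * Real.cos (β (i + 1))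
  else if j = i + 1 then -Real.sin (β (i + 1)) else 0

private lemma tele (s : ℕ → ℝ) (b m : ℕ) (h : b ≤ m) :
    ∑ i ∈ Finset.Ico b m, (∏ k ∈ Finset.Ioc b i, s k) ^ 2 * (1 - s (i + 1) ^ 2)
      = 1 - (∏ k ∈ Finset.Ioc b m, s k) ^ 2 := by
  induction m, h using Nat.le_induction with
  | base => simp
  | succ m hm ih =>
    rw [Finset.sum_Ico_succ_top hm, ih, Finset.prod_Ioc_succ_top hm]
    ring

private lemma aux (n : ℕ) (β : ℕ → ℝ) (hβ0 : β 0 = 0) (hβtop : β (n + 1) = 0)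
    (a b : ℕ) (hab : a ≤ b) (hb : b ≤ n) :
    ∑ i ∈ Finset.range (n + 1), Amat β i a * Amat β i b = if a = b then 1 else 0 := by
  rw [Finset.range_eq_Ico,
    ← Finset.sum_Ico_consecutive _ (Nat.zero_le b) (by omega : b ≤ n + 1)]
  have h2 : ∑ i ∈ Finset.Ico b (n + 1), Amat β i a * Amat β i b
      = Real.cos (β a) * Real.cos (β b) * ∏ k ∈ Finset.Ioc a b, Real.sin (β k) := by
    have hterm : ∀ i ∈ Finset.Ico b (n + 1), Amat β i a * Amat β i b
        = (Real.cos (β a) * Real.cos (β b) * ∏ k ∈ Finset.Ioc a b, Real.sin (β k))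
          * ((∏ k ∈ Finset.Ioc b i, Real.sin (β k)) ^ 2 * (1 - Real.sin (β (i + 1)) ^ 2)) := by
      intro i hi
      obtain ⟨hbi, _⟩ := Finset.mem_Ico.mp hi
      unfold Amat
      rw [if_pos (hab.trans hbi), if_pos hbi, Finset.Icc_add_one_left_eq_Ioc, Finset.Icc_add_one_left_eq_Ioc,
        ← Finset.prod_Ioc_consecutive _ hab hbi, ← Real.cos_sq']
      ring
    rw [Finset.sum_congr rfl hterm, ← Finset.mul_sum,
      tele (fun k => Real.sin (β k)) b (n + 1) (by omega)]
    have hz : (∏ k ∈ Finset.Ioc b (n + 1), Real.sin (β k)) = 0 :=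
      Finset.prod_eq_zero (Finset.mem_Ioc.mpr ⟨by omega, le_refl _⟩)
        (by rw [hβtop, Real.sin_zero])
    rw [hz]; ring
  rw [h2]
  rcases eq_or_lt_of_le hab with rfl | hlt
  · rw [if_pos rfl]
    rcases Nat.eq_zero_or_eq_succ_pred a with h0 | hs
    · subst h0
      simp [hβ0]
    · set m := a - 1 with hm
      have ha : a = m + 1 := hs
      have h1 : ∑ i ∈ Finset.Ico 0 a, Amat β i a * Amat β i a = Real.sin (β a) ^ 2 := by
        rw [ha]
        rw [Finset.sum_eq_single_of_mem m (by simp [Finset.mem_Ico])]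
        · unfold Amat
          rw [if_neg (by omega), if_pos rfl]
          rw [← ha]; ring
        · intro i hi hne
          obtain ⟨_, hlt'⟩ := Finset.mem_Ico.mp hi
          unfold Amat
          rw [if_neg (by omega), if_neg (by omega)]
          ring
      rw [h1]
      simp only [Finset.Ioc_self, Finset.prod_empty, mul_one]
      linear_combination Real.sin_sq_add_cos_sq (β a)
  · rw [if_neg (by omega)]
    obtain ⟨m, rfl⟩ : ∃ m, b = m + 1 := ⟨b - 1, by omega⟩
    have ham : a ≤ m := by omega
    have h1 : ∑ i ∈ Finset.Ico 0 (m + 1), Amat β i a * Amat β i (m + 1)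
        = (Real.cos (β a) * (∏ k ∈ Finset.Ioc a m, Real.sin (β k)) * Real.cos (β (m + 1)))
          * (-Real.sin (β (m + 1))) := by
      rw [Finset.sum_eq_single_of_mem m (by simp [Finset.mem_Ico])]
      · unfold Amat
        rw [if_pos ham, if_neg (by omega), if_pos rfl, Finset.Icc_add_one_left_eq_Ioc]
      · intro i hi hne
        obtain ⟨_, hlt'⟩ := Finset.mem_Ico.mp hi
        have hz : Amat β i (m + 1) = 0 := by
          unfold Amat
          rw [if_neg (by omega), if_neg (by omega)]
        rw [hz, mul_zero]
    rw [h1, Finset.prod_Ioc_succ_top ham]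
    ring

/-- For any tuple `β = (β₁,…,β_n)` of real numbers (given as `β : ℕ → ℝ` with the
conventions `β₀ = β_{n+1} = 0`), the `(n+1)×(n+1)` matrix `R(β)` with (1-based) entries
`R(β)_{IJ} = cos(β_{J-1})(∏_{k=J}^{I-1} sin(β_k))cos(β_I)` if `J ≤ I`,
`R(β)_{IJ} = -sin(β_I)` if `J = I+1`, and `R(β)_{IJ} = 0` if `J > I+1`, is orthogonal:
`R(β)ᵀ R(β) = 1`. (Here rows/columns are indexed by `i j : Fin (n+1)`, with 1-based
index `I = i+1`, `J = j+1`.) -/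
theorem R_beta_orthogonal
    (n : ℕ) (β : ℕ → ℝ) (hβ0 : β 0 = 0) (hβtop : β (n + 1) = 0) :
    let R : Matrix (Fin (n + 1)) (Fin (n + 1)) ℝ := fun i j =>
      if (j : ℕ) ≤ (i : ℕ) then
        Real.cos (β j) * (∏ k ∈ Finset.Icc ((j : ℕ) + 1) (i : ℕ), Real.sin (β k))
          * Real.cos (β ((i : ℕ) + 1))
      else if (j : ℕ) = (i : ℕ) + 1 then
        -Real.sin (β ((i : ℕ) + 1))
      else 0
    Rᵀ * R = 1 := by
  intro R
  ext j j'
  rw [Matrix.mul_apply, Matrix.one_apply]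
  have hRA : ∀ (i k : Fin (n + 1)), R i k = Amat β (i : ℕ) (k : ℕ) := fun i k => rfl
  have hsum : ∀ a b : Fin (n + 1),
      ∑ i : Fin (n + 1), Rᵀ a i * R i b
        = ∑ i ∈ Finset.range (n + 1), Amat β i (a : ℕ) * Amat β i (b : ℕ) := by
    intro a b
    rw [← Fin.sum_univ_eq_sum_range (fun i => Amat β i (a : ℕ) * Amat β i (b : ℕ)) (n + 1)]
    exact Finset.sum_congr rfl fun i _ => by rw [Matrix.transpose_apply, hRA, hRA]
  rw [hsum]
  have hj : (j : ℕ) ≤ n := by omega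
  have hj' : (j' : ℕ) ≤ n := by omega
  rcases le_total (j : ℕ) (j' : ℕ) with h | h
  · rw [aux n β hβ0 hβtop _ _ h hj']
    simp [Fin.ext_iff]
  · have : ∑ i ∈ Finset.range (n + 1), Amat β i (j : ℕ) * Amat β i (j' : ℕ)
        = ∑ i ∈ Finset.range (n + 1), Amat β i (j' : ℕ) * Amat β i (j : ℕ) :=
      Finset.sum_congr rfl fun i _ => mul_comm _ _
    rw [this, aux n β hβ0 hβtop _ _ h hj]
    simp [Fin.ext_iff, eq_comm]
end

section
/- Suppose σ : ℝ^h → ℝ^h satisfies σ(z) ≠ 0 for all z ∈ ℝ^h. Then the map g·(U,V,x) = (U R_{σ(Vx)} R_{σ(gVx)}⁻¹, gV, x) defines a group action of GL_h(ℝ) on ℝ^{m×h} × ℝ^{h×n} × ℝ^n, and the extended feedforward function F(U,V,x) = U σ(Vx) is invariant under this action: F(g·(U,V,x)) = F(U,V,x). -/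
open Matrix

/-- Suppose `σ : ℝ^h → ℝ^h` is nowhere zero, and `R` is the rotation construction:
for every nonzero `z`, `R_z` is invertible with first column `z` (`R_z e₁ = z`). Then
`g·(U,V,x) = (U R_{σ(Vx)} R_{σ(gVx)}⁻¹, gV, x)` defines an action of `GL_h(ℝ)`:
the identity acts trivially, the composition axiom holds, and the extended feedforward
function `F(U,V,x) = U σ(Vx)` is invariant. -/
theorem nonlinear_data_dependent_action
    {m h n : ℕ} [NeZero h]
    (σ : (Fin h → ℝ) → (Fin h → ℝ)) (hσ : ∀ z, σ z ≠ 0)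
    (R : (Fin h → ℝ) → Matrix (Fin h) (Fin h) ℝ)
    (hRunit : ∀ z, z ≠ 0 → IsUnit (R z))
    (hRcol : ∀ z, z ≠ 0 → R z *ᵥ Pi.single 0 1 = z) :
    -- identity axiom
    (∀ (U : Matrix (Fin m) (Fin h) ℝ) (V : Matrix (Fin h) (Fin n) ℝ) (x : Fin n → ℝ),
      U * R (σ (V *ᵥ x)) * (R (σ (((1 : Matrix (Fin h) (Fin h) ℝ) * V) *ᵥ x)))⁻¹ = U ∧
      (1 : Matrix (Fin h) (Fin h) ℝ) * V = V) ∧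
    -- composition axiom
    (∀ g₁ g₂ : Matrix (Fin h) (Fin h) ℝ, IsUnit g₁ → IsUnit g₂ →
      ∀ (U : Matrix (Fin m) (Fin h) ℝ) (V : Matrix (Fin h) (Fin n) ℝ) (x : Fin n → ℝ),
        (U * R (σ (V *ᵥ x)) * (R (σ ((g₂ * V) *ᵥ x)))⁻¹)
            * R (σ ((g₂ * V) *ᵥ x)) * (R (σ ((g₁ * (g₂ * V)) *ᵥ x)))⁻¹
          = U * R (σ (V *ᵥ x)) * (R (σ ((g₁ * (g₂ * V)) *ᵥ x)))⁻¹ ∧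
        g₁ * (g₂ * V) = g₁ * g₂ * V) ∧
    -- invariance of the feedforward function
    (∀ g : Matrix (Fin h) (Fin h) ℝ, IsUnit g →
      ∀ (U : Matrix (Fin m) (Fin h) ℝ) (V : Matrix (Fin h) (Fin n) ℝ) (x : Fin n → ℝ),
        (U * R (σ (V *ᵥ x)) * (R (σ ((g * V) *ᵥ x)))⁻¹) *ᵥ σ ((g * V) *ᵥ x)
          = U *ᵥ σ (V *ᵥ x)) := by
  have key : ∀ z : Fin h → ℝ, IsUnit (R (σ z)).det := fun z =>
    (Matrix.isUnit_iff_isUnit_det _).mp (hRunit _ (hσ _))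
  refine ⟨?_, ?_, ?_⟩
  · intro U V x
    refine ⟨?_, Matrix.one_mul V⟩
    rw [Matrix.one_mul, Matrix.mul_assoc,
      Matrix.mul_nonsing_inv _ (key _), Matrix.mul_one]
  · intro g₁ g₂ _ _ U V x
    refine ⟨?_, (Matrix.mul_assoc g₁ g₂ V).symm⟩
    rw [Matrix.mul_assoc (U * R (σ (V *ᵥ x))),
      Matrix.nonsing_inv_mul _ (key _), Matrix.mul_one]
  · intro g _ U V x
    have h2 := hRcol _ (hσ ((g * V) *ᵥ x))
    have h1 : (R (σ ((g * V) *ᵥ x)))⁻¹ *ᵥ σ ((g * V) *ᵥ x) = Pi.single 0 1 :=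
      calc (R (σ ((g * V) *ᵥ x)))⁻¹ *ᵥ σ ((g * V) *ᵥ x)
          = (R (σ ((g * V) *ᵥ x)))⁻¹ *ᵥ (R (σ ((g * V) *ᵥ x)) *ᵥ Pi.single 0 1) := by
            rw [h2]
        _ = Pi.single 0 1 := by
            rw [Matrix.mulVec_mulVec, Matrix.nonsing_inv_mul _ (key _), Matrix.one_mulVec]
    rw [← Matrix.mulVec_mulVec, h1, ← Matrix.mulVec_mulVec, hRcol _ (hσ (V *ᵥ x))]
end

section
/- Consider the two-layer linear network with scalar parameters U, V ∈ ℝ and loss L(U,V) = (1/2)(1 - UV)². At a global minimum with conserved quantity value Q = U² - V², taking U = sqrt((Q+√(Q²+4))/2) and V = sqrt((-Q+√(Q²+4))/2), the Hessian of L at (U,V) has eigenvalues 0 and √(Q²+4). -/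
open Polynomial

/-- Two-layer linear network with scalar parameters and loss `L(U,V) = (1/2)(1-UV)²`.
At the global minimum with conserved quantity value `Q = U² - V²`, i.e. taking
`U = √((Q+√(Q²+4))/2)` and `V = √((-Q+√(Q²+4))/2)` (so `UV = 1`), the Hessian
`[[V², 1], [1, U²]]` of `L` has eigenvalues `0` and `√(Q²+4)`: its characteristic
polynomial is `X (X - √(Q²+4))`. -/
theorem hessian_eigenvalues_two_layer_scalar
    (Q : ℝ) :
    let U : ℝ := Real.sqrt ((Q + Real.sqrt (Q ^ 2 + 4)) / 2)
    let V : ℝ := Real.sqrt ((-Q + Real.sqrt (Q ^ 2 + 4)) / 2)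
    let H : Matrix (Fin 2) (Fin 2) ℝ := !![V ^ 2, 1; 1, U ^ 2]
    H.charpoly = X * (X - C (Real.sqrt (Q ^ 2 + 4))) := by
  intro U V H
  set s : ℝ := Real.sqrt (Q ^ 2 + 4) with hs
  have habs : |Q| ≤ s := by
    rw [hs, ← Real.sqrt_sq_eq_abs]
    exact Real.sqrt_le_sqrt (by nlinarith)
  have h1 : (0:ℝ) ≤ (Q + s) / 2 := by
    have := abs_le.mp habs; linarith [this.1]
  have h2 : (0:ℝ) ≤ (-Q + s) / 2 := by
    have := abs_le.mp habs; linarith [this.2]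
  have hU : U ^ 2 = (Q + s) / 2 := Real.sq_sqrt h1
  have hV : V ^ 2 = (-Q + s) / 2 := Real.sq_sqrt h2
  have hs2 : s ^ 2 = Q ^ 2 + 4 := Real.sq_sqrt (by positivity)
  have hUV : U ^ 2 * V ^ 2 = 1 := by rw [hU, hV]; nlinarith
  rw [Matrix.charpoly, Matrix.det_fin_two]
  simp [Matrix.charmatrix_apply, H, hU, hV, Matrix.one_apply]
  have ha : C ((-Q + s) / 2) + C ((Q + s) / 2) = C s := by
    rw [← C_add]; congr 1; ring
  have hb : C ((-Q + s) / 2) * C ((Q + s) / 2) = 1 := by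
    rw [← C_mul, show ((-Q + s) / 2) * ((Q + s) / 2) = (1:ℝ) by nlinarith, map_one]
  linear_combination hb - X * ha
end

section
/- Let a : ℝ → ℝ and b : ℝ → ℝ satisfy a' = (1/λ)(s - a)(a²+1)², b' = (1/λ)(s - b), with a(0) = b(0), where λ > 0 and s ∈ ℝ. Then |a(t) - s| ≤ |a(0) - s| e^{-t/λ} for all t ≥ 0. -/
/-! Since `(a² + 1)² ≥ 1`, the ODE gives `(a - s) a' ≤ -(a - s)² / λ`. Any `u` with
`u u' ≤ -c u²` makes `(u e^{ct})²` nonincreasing (its derivative is `2 e^{2ct} (u u' + c u²)`),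
hence `|u t| e^{ct} ≤ |u 0|` for `t ≥ 0`; apply this to `u = a - s`, `c = 1/λ`. -/

open Real

theorem antitone_sq_mul_exp_of_mul_deriv_le {u u' : ℝ → ℝ} {c : ℝ}
    (hu : ∀ t, HasDerivAt u (u' t) t) (hdecay : ∀ t, u t * u' t ≤ -c * u t ^ 2) :
    Antitone fun t => (u t * exp (c * t)) ^ 2 := by
  have hexp (t : ℝ) : HasDerivAt (fun t => exp (c * t)) (exp (c * t) * c) t := by
    simpa using ((hasDerivAt_id t).const_mul c).exp
  refine antitone_of_hasDerivAt_nonpos (fun t => (((hu t).mul (hexp t)).pow 2)) fun t => ?_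
  have hdecay_t := hdecay t
  calc (2 : ℕ) * (u t * exp (c * t)) ^ (2 - 1) * (u' t * exp (c * t) + u t * (exp (c * t) * c))
      = 2 * exp (c * t) ^ 2 * (u t * u' t + c * u t ^ 2) := by ring
    _ ≤ 0 := mul_nonpos_of_nonneg_of_nonpos (by positivity) (by linarith)

theorem abs_le_abs_mul_exp_of_mul_deriv_le {u u' : ℝ → ℝ} {c : ℝ}
    (hu : ∀ t, HasDerivAt u (u' t) t) (hdecay : ∀ t, u t * u' t ≤ -c * u t ^ 2)
    {t : ℝ} (ht : 0 ≤ t) : |u t| ≤ |u 0| * exp (-(c * t)) := by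
  have hsq := antitone_sq_mul_exp_of_mul_deriv_le hu hdecay ht
  simp only [mul_zero, exp_zero, mul_one] at hsq
  rw [sq_le_sq, abs_mul, abs_of_pos (exp_pos _)] at hsq
  rwa [exp_neg, ← div_eq_mul_inv, le_div_iff₀ (exp_pos _)]

theorem radial_convergence_rate_bound_general
    (lam s : ℝ) (hlam : 0 < lam) (a : ℝ → ℝ)
    (ha : ∀ t : ℝ, HasDerivAt a ((1 / lam) * (s - a t) * ((a t) ^ 2 + 1) ^ 2) t) :
    ∀ t : ℝ, 0 ≤ t → |a t - s| ≤ |a 0 - s| * Real.exp (-t / lam) := by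
  intro t ht
  have hdecay (t : ℝ) :
      (a t - s) * ((1 / lam) * (s - a t) * ((a t) ^ 2 + 1) ^ 2) ≤ -(1 / lam) * (a t - s) ^ 2 := by
    have hgrowth : 1 ≤ ((a t) ^ 2 + 1) ^ 2 := one_le_pow₀ (by nlinarith)
    have : 0 ≤ (1 / lam) * (a t - s) ^ 2 := by positivity
    nlinarith
  have hbound := abs_le_abs_mul_exp_of_mul_deriv_le (fun t => (ha t).sub_const s) hdecay ht
  rwa [show -(1 / lam * t) = -t / lam by ring] at hbound

/-- Comparison bound: if `a' = (1/λ)(s-a)(a²+1)²` and `b' = (1/λ)(s-b)` with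
`a(0) = b(0)`, `λ > 0`, then `|a(t) - s| ≤ |a(0) - s| e^{-t/λ}` for all `t ≥ 0`. -/
theorem radial_convergence_rate_bound
    (lam s : ℝ) (hlam : 0 < lam) (a b : ℝ → ℝ)
    (ha : ∀ t : ℝ, HasDerivAt a ((1 / lam) * (s - a t) * ((a t) ^ 2 + 1) ^ 2) t)
    (hb : ∀ t : ℝ, HasDerivAt b ((1 / lam) * (s - b t)) t)
    (h0 : a 0 = b 0) :
    ∀ t : ℝ, 0 ≤ t → |a t - s| ≤ |a 0 - s| * Real.exp (-t / lam) :=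
  radial_convergence_rate_bound_general lam s hlam a ha
end
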